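/- arXiv:alg-geom/9604006 — 5 statements merged into one kernel-verified Lean document; each statement's English description precedes it below -/
import Mathlib

section
/- Let H be a numerical semigroup of genus g whose smallest nonzero element is at least 3. Write the gaps of H in increasing order as ℓ_1 < ℓ_2 < ... < ℓ_g. Then ℓ_i ≤ 2i−2 for all i with 2 ≤ i ≤ g−1, and ℓ_g ≤ 2g−1. -/
/-!
Let `L` be a gap with exactly `c` gaps below it. Since `L ∉ H`, the reflection `n ↦ L - n` sends
the elements of `H` below `L` injectively to gaps in `[1, L]`; there are `L - c` of the former and
`c + 1` of the latter, so `L ≤ 2c + 1`. In the extremal case `L = 2c + 1` the reflection is onto,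
so `L - v ∈ H` for every gap `v`. If moreover a next gap `m > L` exists, then for gaps `v, v + 1`
below `L` the numbers `v + (m - L), v + 1 + (m - L)` are gaps again, since `m` minus an element of
`H` is a gap. Shifting the pair of gaps `1, 2` this way, some pair `v, v + 1` must end exactly at
`v + 1 = L` (it cannot jump past `L`, as no gaps lie between `L` and `m`), and then `L - v = 1`
lies in `H`, which is absurd.
-/

open Finset Nat

theorem Nat.count_apply_of_strictMono {p : ℕ → Prop} [DecidablePred p] {n : ℕ} {f : Fin n → ℕ}
    (hf : StrictMono f) (hrange : Set.range f = {x | p x}) (i : Fin n) : count p (f i) = i := by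
  have hp : ∀ x, p x ↔ ∃ j, f j = x := fun x => by
    rw [← Set.mem_range, hrange, Set.mem_ofPred_eq]
  rw [count_eq_card_filter_range, ← Fin.card_Iio i]
  symm
  apply card_nbij f
  · intro j hj
    simp only [coe_Iio, Set.mem_Iio] at hj
    simpa [hp] using hf hj
  · exact hf.injective.injOn
  · intro x hx
    simp only [coe_filter, mem_range, Set.mem_ofPred_eq, hp] at hx
    obtain ⟨hx, j, rfl⟩ := hx
    exact ⟨j, by simpa using hf.lt_iff_lt.mp hx, rfl⟩

theorem Nat.count_add_count_not (p : ℕ → Prop) [DecidablePred p] (n : ℕ) :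
    count p n + count (fun x => ¬p x) n = n := by
  rw [count_eq_card_filter_range, count_eq_card_filter_range, card_filter_add_card_filter_not,
    card_range]

namespace AddSubmonoid

variable {S : AddSubmonoid ℕ}

theorem sub_notMem {x s : ℕ} (hx : x ∉ S) (hs : s ∈ S) (hsx : s ≤ x) : x - s ∉ S :=
  fun h => hx (by simpa [Nat.add_sub_cancel' hsx] using S.add_mem hs h)

theorem add_one_mem_of_notMem {L m : ℕ} (hrefl : ∀ v ∉ S, L - v ∈ S) (h1 : 1 ∉ S)
    (hm : m ∉ S) (hLm : L < m) (hIoo : ∀ n ∈ Set.Ioo L m, n ∈ S) (v : ℕ) (hv : v ∉ S)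
    (hvm : v + 1 < m) : v + 1 ∈ S := by
  by_contra hv1
  rcases lt_trichotomy (v + 1) L with hlt | heq | hgt
  · have hshift : ∀ w ∉ S, w < L → w + (m - L) ∉ S := fun w hw hwL => by
      have := sub_notMem hm (hrefl w hw) (by omega)
      rwa [show m - (L - w) = w + (m - L) by omega] at this
    have := add_one_mem_of_notMem hrefl h1 hm hLm hIoo (v + (m - L)) (hshift v hv (by omega))
      (by omega)
    exact hshift (v + 1) hv1 hlt (by rwa [show v + 1 + (m - L) = v + (m - L) + 1 by omega])
  · exact h1 (by simpa [← heq] using hrefl v hv)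
  · exact hv1 (hIoo _ ⟨hgt, hvm⟩)
termination_by L - v

variable [DecidablePred (· ∈ S)]

theorem count_mem_add_card_le_count_notMem {L : ℕ} (hL : L ∉ S) (T : Finset ℕ)
    (hT : ∀ v ∈ T, v ≤ L ∧ v ∉ S ∧ L - v ∉ S) :
    count (· ∈ S) L + #T ≤ count (· ∉ S) (L + 1) := by
  rw [count_eq_card_filter_range, count_eq_card_filter_range]
  have hinj : Set.InjOn (L - ·) ({x ∈ range L | x ∈ S} : Finset ℕ) := fun x hx y hy hxy => by
    simp only [coe_filter, mem_range, Set.mem_ofPred_eq] at hx hy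
    simp only at hxy
    omega
  rw [← Finset.card_image_of_injOn hinj, ← card_union_of_disjoint]
  · apply card_le_card
    intro x hx
    simp only [mem_union, mem_image, mem_filter, mem_range] at hx ⊢
    rcases hx with ⟨y, ⟨hyL, hy⟩, rfl⟩ | hx
    · exact ⟨by omega, sub_notMem hL hy hyL.le⟩
    · exact ⟨by have := (hT x hx).1; omega, (hT x hx).2.1⟩
  · rw [disjoint_left]
    simp only [mem_image, mem_filter, mem_range]
    rintro _ ⟨y, ⟨hyL, hy⟩, rfl⟩ hT'
    exact (hT _ hT').2.2 (by rwa [Nat.sub_sub_self hyL.le])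

theorem le_two_mul_count_notMem_add_one {L : ℕ} (hL : L ∉ S) :
    L ≤ 2 * count (· ∉ S) L + 1 := by
  have hle := count_mem_add_card_le_count_notMem hL ∅ (by simp)
  rw [card_empty, count_succ_eq_succ_count_iff.mpr hL] at hle
  have := count_add_count_not (· ∈ S) L
  omega

theorem sub_mem_of_eq_two_mul_count_notMem_add_one {L : ℕ} (hL : L ∉ S)
    (hcount : L = 2 * count (· ∉ S) L + 1) {v : ℕ} (hv : v ∉ S) : L - v ∈ S := by
  by_contra hLv
  have hvL : v ≤ L := by
    by_contra
    exact hLv (by rw [show L - v = 0 by omega]; exact S.zero_mem)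
  have hle := count_mem_add_card_le_count_notMem hL {v} (by simp [hvL, hv, hLv])
  rw [card_singleton, count_succ_eq_succ_count_iff.mpr hL] at hle
  have := count_add_count_not (· ∈ S) L
  omega

theorem le_two_mul_count_notMem {L m : ℕ} (h1 : 1 ∉ S) (h2 : 2 ∉ S) (hL : L ∉ S)
    (hcount : 1 ≤ count (· ∉ S) L) (hm : m ∉ S) (hLm : L < m)
    (hIoo : ∀ n ∈ Set.Ioo L m, n ∈ S) : L ≤ 2 * count (· ∉ S) L := by
  by_contra hlt
  have hextremal : L = 2 * count (· ∉ S) L + 1 := by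
    have := le_two_mul_count_notMem_add_one hL
    omega
  have hrefl : ∀ v ∉ S, L - v ∈ S := fun _ hv =>
    sub_mem_of_eq_two_mul_count_notMem_add_one hL hextremal hv
  exact h2 (add_one_mem_of_notMem hrefl h1 hm hLm hIoo 1 h1 (by omega))

end AddSubmonoid

open AddSubmonoid in
theorem oliveira_gap_bounds_general
    (g : ℕ) (H : Set ℕ)
    (h0 : 0 ∈ H) (hadd : ∀ a ∈ H, ∀ b ∈ H, a + b ∈ H)
    (hmult : ∀ h ∈ H, h ≠ 0 → 3 ≤ h)
    (ℓ : Fin g → ℕ) (hmono : StrictMono ℓ)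
    (hrange : Set.range ℓ = {n : ℕ | n ∉ H}) :
    (∀ i : Fin g, 2 ≤ (i : ℕ) + 1 → (i : ℕ) + 1 ≤ g - 1 →
      ℓ i ≤ 2 * ((i : ℕ) + 1) - 2) ∧
    (∀ i : Fin g, (i : ℕ) + 1 = g → ℓ i ≤ 2 * g - 1) := by
  classical
  let S : AddSubmonoid ℕ := ⟨⟨H, fun ha hb => hadd _ ha _ hb⟩, h0⟩
  replace hrange : Set.range ℓ = {n | n ∉ S} := hrange
  have hgap : ∀ i, ℓ i ∉ S := fun i => hrange.subset ⟨i, rfl⟩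
  have hcount : ∀ i, count (· ∉ S) (ℓ i) = i := count_apply_of_strictMono hmono hrange
  have h1 : 1 ∉ S := fun h => by have := hmult 1 h one_ne_zero; omega
  have h2 : 2 ∉ S := fun h => by have := hmult 2 h two_ne_zero; omega
  refine ⟨fun i hi hig => ?_, fun i hig => ?_⟩
  · obtain ⟨j, hj⟩ : ∃ j : Fin g, (j : ℕ) = i + 1 := ⟨⟨i + 1, by omega⟩, rfl⟩
    have hIoo : ∀ n ∈ Set.Ioo (ℓ i) (ℓ j), n ∈ S := fun n ⟨hin, hnj⟩ => by
      by_contra hn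
      obtain ⟨k, rfl⟩ := hrange.superset hn
      have := Fin.lt_def.mp (hmono.lt_iff_lt.mp hin)
      have := Fin.lt_def.mp (hmono.lt_iff_lt.mp hnj)
      omega
    have := le_two_mul_count_notMem h1 h2 (hgap i) (by rw [hcount]; omega) (hgap j)
      (hmono (Fin.lt_def.mpr (by omega))) hIoo
    rw [hcount] at this
    omega
  · have := le_two_mul_count_notMem_add_one (hgap i)
    rw [hcount] at this
    omega

theorem oliveira_gap_bounds
    (g : ℕ) (H : Set ℕ)
    (h0 : 0 ∈ H) (hadd : ∀ a ∈ H, ∀ b ∈ H, a + b ∈ H)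
    (hfin : {n : ℕ | n ∉ H}.Finite) (hg : {n : ℕ | n ∉ H}.ncard = g)
    (hmult : ∀ h ∈ H, h ≠ 0 → 3 ≤ h)
    (ℓ : Fin g → ℕ) (hmono : StrictMono ℓ)
    (hrange : Set.range ℓ = {n : ℕ | n ∉ H}) :
    (∀ i : Fin g, 2 ≤ (i : ℕ) + 1 → (i : ℕ) + 1 ≤ g - 1 →
      ℓ i ≤ 2 * ((i : ℕ) + 1) - 2) ∧
    (∀ i : Fin g, (i : ℕ) + 1 = g → ℓ i ≤ 2 * g - 1) :=
  oliveira_gap_bounds_general g H h0 hadd hmult ℓ hmono hrange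
end

section
/- Let H be a numerical semigroup and let H_even = {h ∈ H : h even}. Then the set {h/2 : h ∈ H_even} is again a numerical semigroup. Moreover, if this semigroup has genus γ, then H has exactly γ even gaps. -/
theorem half_even_is_numerical_semigroup
    (H : Set ℕ)
    (h0 : 0 ∈ H) (hadd : ∀ a ∈ H, ∀ b ∈ H, a + b ∈ H)
    (hfin : {n : ℕ | n ∉ H}.Finite) :
    (0 ∈ {m : ℕ | 2 * m ∈ H}) ∧
    (∀ a ∈ {m : ℕ | 2 * m ∈ H}, ∀ b ∈ {m : ℕ | 2 * m ∈ H},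
      a + b ∈ {m : ℕ | 2 * m ∈ H}) ∧
    ({m : ℕ | m ∉ {m : ℕ | 2 * m ∈ H}}.Finite) ∧
    (∀ γ : ℕ, {m : ℕ | m ∉ {m : ℕ | 2 * m ∈ H}}.ncard = γ →
      {n : ℕ | n ∉ H ∧ Even n}.ncard = γ) := by
  have himg : {n : ℕ | n ∉ H ∧ Even n} = (fun m => 2 * m) '' {m : ℕ | m ∉ {m : ℕ | 2 * m ∈ H}} := by
    ext n
    constructor
    · rintro ⟨hn, k, hk⟩
      refine ⟨k, ?_, by simp; omega⟩
      simp only [Set.mem_setOf_eq, not_not]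
      rw [two_mul, ← hk]
      exact hn
    · rintro ⟨m, hm, rfl⟩
      exact ⟨hm, m, by ring⟩
  have hinj : Set.InjOn (fun m => 2 * m) {m : ℕ | m ∉ {m : ℕ | 2 * m ∈ H}} := by
    intro a _ b _ h
    simp only at h
    omega
  have hfin2 : {m : ℕ | m ∉ {m : ℕ | 2 * m ∈ H}}.Finite := by
    have hinj' : Function.Injective (fun m : ℕ => 2 * m) := fun a b h => by
      simp only at h; omega
    exact Set.Finite.preimage hinj'.injOn hfin
  refine ⟨by simpa using h0, ?_, hfin2, ?_⟩
  · intro a ha b hb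
    have := hadd _ ha _ hb
    simpa [mul_add] using this
  · intro γ hγ
    rw [himg, Set.ncard_image_of_injOn hinj, hγ]
end

section
/- Let γ ≥ 1 and g ≥ 2γ be natural numbers. Let H be a numerical semigroup of genus g with gaps ℓ_1 < ... < ℓ_g such that every nonzero element of H is at least g − 2γ + 1, every gap satisfies ℓ_i ≤ 2i − 2 for 2 ≤ i ≤ g − 1 and ℓ_g ≤ 2g − 1, and ℓ_i = i for 1 ≤ i ≤ g − 2γ. If some gap lies in the interval [g − 2γ + 1, g], then the weight w(H) = Σ_{i=1}^{g}(ℓ_i − i) satisfies w(H) ≤ (2γ − 1)g − (γ − 1)(2γ + 1). -/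
theorem weight_bound_unramified_case_a
    (g γ : ℕ) (hγ : 1 ≤ γ) (hg : 2 * γ ≤ g)
    (H : Set ℕ)
    (h0 : 0 ∈ H) (hadd : ∀ a ∈ H, ∀ b ∈ H, a + b ∈ H)
    (hfin : {n : ℕ | n ∉ H}.Finite) (hgenus : {n : ℕ | n ∉ H}.ncard = g)
    (ℓ : Fin g → ℕ) (hmono : StrictMono ℓ)
    (hrange : Set.range ℓ = {n : ℕ | n ∉ H})
    (hmin : ∀ h ∈ H, h ≠ 0 → g - 2 * γ + 1 ≤ h)
    (hbd : ∀ i : Fin g, 2 ≤ (i : ℕ) + 1 → (i : ℕ) + 1 ≤ g - 1 →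
      ℓ i ≤ 2 * ((i : ℕ) + 1) - 2)
    (hlastbd : ∀ i : Fin g, (i : ℕ) + 1 = g → ℓ i ≤ 2 * g - 1)
    (hinit : ∀ i : Fin g, (i : ℕ) + 1 ≤ g - 2 * γ → ℓ i = (i : ℕ) + 1)
    (hgap : ∃ n : ℕ, n ∉ H ∧ g - 2 * γ + 1 ≤ n ∧ n ≤ g) :
    ∑ i, ((ℓ i : ℤ) - ((i : ℕ) + 1)) ≤
      (2 * γ - 1) * g - (γ - 1) * (2 * γ + 1) := by
  obtain ⟨n, hnH, hn1, hn2⟩ := hgap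
  have hn : n ∈ Set.range ℓ := by rw [hrange]; exact hnH
  obtain ⟨j, hj⟩ := hn
  set m := g - 2 * γ with hmdef
  have hgm : g = m + 2 * γ := by omega
  have hmlt : m < g := by omega
  have hjm : m ≤ (j : ℕ) := by
    by_contra h
    push_neg at h
    have h1 := hinit j (by omega)
    omega
  have hℓm : ℓ ⟨m, hmlt⟩ ≤ g := by
    have h1 : ℓ ⟨m, hmlt⟩ ≤ ℓ j := hmono.monotone (by simpa [Fin.le_def] using hjm)
    omega
  set c : ℕ → ℤ := fun i =>
    if i < m then 0 else if i = m then 2 * (γ : ℤ) - 1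
    else if i = g - 1 then (g : ℤ) - 1 else (i : ℤ) - 1 with hcdef
  have hterm : ∀ i : Fin g, ((ℓ i : ℤ) - ((i : ℕ) + 1)) ≤ c i := by
    intro i
    rcases lt_trichotomy (i : ℕ) m with h | h | h
    · have h1 := hinit i (by omega)
      simp only [hcdef, if_pos h]
      omega
    · have h1 : ℓ i ≤ g := by
        have he : i = (⟨m, hmlt⟩ : Fin g) := by ext; exact h
        rw [he]; exact hℓm
      simp only [hcdef, if_neg (by omega : ¬ (i : ℕ) < m), if_pos h]
      omega
    · have hilt : (i : ℕ) < g := i.isLt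
      rcases eq_or_lt_of_le (Nat.succ_le_of_lt hilt) with hlast | hmid
      · have h1 := hlastbd i hlast
        simp only [hcdef, if_neg (by omega : ¬ (i : ℕ) < m), if_neg (by omega : ¬ (i : ℕ) = m),
          if_pos (by omega : (i : ℕ) = g - 1)]
        omega
      · have h1 := hbd i (by omega) (by omega)
        simp only [hcdef, if_neg (by omega : ¬ (i : ℕ) < m), if_neg (by omega : ¬ (i : ℕ) = m),
          if_neg (by omega : ¬ (i : ℕ) = g - 1)]
        omega
  have hle : ∑ i : Fin g, ((ℓ i : ℤ) - ((i : ℕ) + 1)) ≤ ∑ i : Fin g, c i :=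
    Finset.sum_le_sum fun i _ => hterm i
  have hsum1 : ∑ i : Fin g, c (i : ℕ) = ∑ i ∈ Finset.range g, c i :=
    Fin.sum_univ_eq_sum_range c g
  obtain ⟨k, hk⟩ : ∃ k, 2 * γ = k + 2 := ⟨2 * γ - 2, by omega⟩
  have hrangesplit : ∑ i ∈ Finset.range g, c i
      = ∑ i ∈ Finset.range m, c i + ∑ i ∈ Finset.range (2 * γ), c (m + i) := by
    rw [hgm, Finset.sum_range_add]
  have h0s : ∑ i ∈ Finset.range m, c i = 0 :=
    Finset.sum_eq_zero fun i hi => by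
      simp only [hcdef, if_pos (Finset.mem_range.mp hi)]
  have hsplit2 : ∑ i ∈ Finset.range (2 * γ), c (m + i)
      = (∑ i ∈ Finset.range k, c (m + (i + 1)) + c (m + 0)) + c (m + (k + 1)) := by
    rw [hk, Finset.sum_range_succ, Finset.sum_range_succ']
  have hcm : c (m + 0) = 2 * (γ : ℤ) - 1 := by
    simp only [hcdef, Nat.add_zero]
    rw [if_neg (by omega)]
    simp
  have hclast : c (m + (k + 1)) = (g : ℤ) - 1 := by
    simp only [hcdef]
    rw [if_neg (by omega), if_neg (by omega), if_pos (by omega)]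
  have hmsum : ∑ i ∈ Finset.range k, c (m + (i + 1)) = ∑ i ∈ Finset.range k, ((m : ℤ) + i) := by
    refine Finset.sum_congr rfl fun i hi => ?_
    have hik := Finset.mem_range.mp hi
    simp only [hcdef]
    rw [if_neg (by omega), if_neg (by omega), if_neg (by omega)]
    push_cast
    ring
  have gauss : ∀ N : ℕ, (∑ j ∈ Finset.range N, (j : ℤ)) * 2 = N * (N - 1) := by
    intro N
    induction N with
    | zero => simp
    | succ p ih =>
      rw [Finset.sum_range_succ, add_mul, ih]
      push_cast
      ring
  have hsum2 : ∑ i ∈ Finset.range k, ((m : ℤ) + i)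
      = k * m + ∑ j ∈ Finset.range k, (j : ℤ) := by
    rw [Finset.sum_add_distrib, Finset.sum_const, Finset.card_range]
    push_cast
    ring
  have h2S : (∑ j ∈ Finset.range k, (j : ℤ)) * 2 = (k : ℤ) * ((k : ℤ) - 1) := gauss k
  have hkc : (k : ℤ) = 2 * (γ : ℤ) - 2 := by omega
  have hmc : (m : ℤ) = (g : ℤ) - 2 * γ := by omega
  refine le_trans hle ?_
  rw [hsum1, hrangesplit, h0s, hsplit2, hcm, hclast, hmsum, hsum2, hkc, hmc]
  rw [hkc] at h2S
  nlinarith [h2S]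
end

section
/- Let γ ≥ 1 and g ≥ 8γ be natural numbers. Let H be a numerical semigroup of genus g such that every nonzero element of H is at least g − 2γ + 1 and the interval [g − 2γ + 1, g] is entirely contained in H. Then the weight w(H) = Σ_{i=1}^{g}(ℓ_i − i) (where ℓ_1 < ... < ℓ_g are the gaps) satisfies w(H) ≤ 2γg − 2γ(4γ − 1), with the maximum attained when the gap set is {1, ..., g−2γ} ∪ {2g−6γ+2, ..., 2g−4γ+1}. -/
/-!
Every nonzero element of `H` is at least `g - 2γ + 1`, so `1, …, g - 2γ` are gaps; adding two
elements of `[g - 2γ + 1, g]` puts `[2g - 4γ + 2, 2g]` into `H`. Since no gap of a semigroup of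
genus `g` exceeds `2g - 1` (for a gap `n`, `a ↦ n - a` sends the elements of `H` below `n`
injectively to gaps), every gap is at most `2g - 4γ + 1`. Hence `ℓ i ≤ i + 1` for the first
`g - 2γ` indices, while each of the last `2γ` gaps contributes at most `g - 4γ + 1`.
-/

open Finset

section AddClosed

variable {H : Set ℕ}

theorem Icc_two_mul_subset_of_Icc_subset (hadd : ∀ a ∈ H, ∀ b ∈ H, a + b ∈ H) {a b : ℕ}
    (hab : Set.Icc a b ⊆ H) : Set.Icc (2 * a) (2 * b) ⊆ H := by
  rintro n ⟨hn₁, hn₂⟩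
  have hx : max a (n - b) ∈ Set.Icc a b := ⟨le_max_left _ _, by omega⟩
  have hy : n - max a (n - b) ∈ Set.Icc a b := ⟨by omega, by omega⟩
  simpa [show max a (n - b) + (n - max a (n - b)) = n by omega] using
    hadd _ (hab hx) _ (hab hy)

theorem add_one_le_two_mul_ncard_compl (hadd : ∀ a ∈ H, ∀ b ∈ H, a + b ∈ H)
    (hfin : Hᶜ.Finite) {n : ℕ} (hn : n ∉ H) : n + 1 ≤ 2 * Hᶜ.ncard := by
  classical
  set S := (range (n + 1)).filter (· ∈ H)
  set T := (range (n + 1)).filter (· ∉ H)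
  have hST : #S + #T = n + 1 := by rw [card_filter_add_card_filter_not, card_range]
  have hT : #T ≤ Hᶜ.ncard := by
    rw [← Set.ncard_coe_finset]
    exact Set.ncard_le_ncard (fun x hx => (mem_filter.1 hx).2) hfin
  have hS : #S ≤ #T := by
    refine card_le_card_of_injOn (n - ·) (fun a ha => ?_) (fun a ha b hb hab => ?_)
    · rw [mem_coe, mem_filter, mem_range] at ha
      rw [mem_coe, mem_filter, mem_range]
      refine ⟨Nat.lt_succ_of_le (Nat.sub_le n a), fun hna => hn ?_⟩
      simpa [Nat.add_sub_cancel' (Nat.lt_succ_iff.1 ha.1)] using hadd a ha.2 _ hna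
    · rw [mem_coe, mem_filter, mem_range] at ha hb
      simp only at hab
      omega
  omega

theorem lt_two_mul_of_Icc_ncard_compl_subset (hadd : ∀ a ∈ H, ∀ b ∈ H, a + b ∈ H)
    (hfin : Hᶜ.Finite) {a : ℕ} (ha : Set.Icc a Hᶜ.ncard ⊆ H) {n : ℕ} (hn : n ∉ H) :
    n < 2 * a := by
  have hfrob := add_one_le_two_mul_ncard_compl hadd hfin hn
  by_contra! hle
  exact hn (Icc_two_mul_subset_of_Icc_subset hadd ha ⟨hle, by omega⟩)

end AddClosed

namespace StrictMono

variable {n : ℕ} {f : Fin n → ℕ}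

theorem apply_add_sub_le (hf : StrictMono f) {i j : Fin n} (hij : i ≤ j) :
    f i + (j - i : ℕ) ≤ f j := by
  have hsub : (Icc i j).image f ⊆ Icc (f i) (f j) := by
    rintro _ hv
    obtain ⟨k, hk, rfl⟩ := mem_image.1 hv
    obtain ⟨hik, hkj⟩ := mem_Icc.1 hk
    exact mem_Icc.2 ⟨hf.monotone hik, hf.monotone hkj⟩
  have hcard := card_le_card hsub
  rw [card_image_of_injective _ hf.injective, Fin.card_Icc, Nat.card_Icc] at hcard
  have := hf.monotone hij
  omega

theorem apply_le_add_one_of_Icc_subset_range (hf : StrictMono f) {m : ℕ}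
    (hm : Set.Icc 1 m ⊆ Set.range f) {i : Fin n} (hi : (i : ℕ) < m) : f i ≤ i + 1 := by
  by_contra! hlt
  -- the `i + 1` values `1, …, i + 1` would all be taken at the `i` indices below `i`
  have hsub : Icc 1 ((i : ℕ) + 1) ⊆ (Iio i).image f := by
    intro v hv
    obtain ⟨hv₁, hv₂⟩ := mem_Icc.1 hv
    obtain ⟨j, rfl⟩ := hm ⟨hv₁, by omega⟩
    exact mem_image_of_mem f (mem_Iio.2 (hf.lt_iff_lt.1 (by omega)))
  have hcard := (card_le_card hsub).trans card_image_le
  rw [Nat.card_Icc, Fin.card_Iio] at hcard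
  omega

end StrictMono

def weight {g : ℕ} (ℓ : Fin g → ℕ) : ℤ :=
  ∑ i, ((ℓ i : ℤ) - ((i : ℕ) + 1))

theorem weight_le {g m F : ℕ} {ℓ : Fin g → ℕ} (hℓ : StrictMono ℓ)
    (hm : Set.Icc 1 m ⊆ Set.range ℓ) (hF : ∀ i, ℓ i ≤ F) :
    weight ℓ ≤ ((g - m : ℕ) : ℤ) * ((F : ℤ) - g) := by
  classical
  unfold weight
  rw [← sum_filter_add_sum_filter_not univ (fun i : Fin g => (i : ℕ) < m)]
  have hlow : ∑ i ∈ univ.filter fun i : Fin g => (i : ℕ) < m, ((ℓ i : ℤ) - ((i : ℕ) + 1)) ≤ 0 :=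
    sum_nonpos fun i hi => by
      have := hℓ.apply_le_add_one_of_Icc_subset_range hm (mem_filter.1 hi).2
      omega
  have hhigh : ∑ i ∈ univ.filter fun i : Fin g => ¬(i : ℕ) < m, ((ℓ i : ℤ) - ((i : ℕ) + 1)) ≤
      #{i : Fin g | ¬(i : ℕ) < m} • ((F : ℤ) - g) :=
    sum_le_card_nsmul _ _ _ fun i _ => by
      have hi := i.isLt
      let j : Fin g := ⟨g - 1, by omega⟩
      have hj : (j : ℕ) = g - 1 := rfl
      have := hℓ.apply_add_sub_le (i := i) (j := j) (Fin.le_def.2 (by omega))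
      have := hF j
      omega
  have hcard : #{i : Fin g | ¬(i : ℕ) < m} = g - m := by
    have := card_filter_add_card_filter_not (s := univ) (fun i : Fin g => (i : ℕ) < m)
    rw [Fin.card_filter_val_lt, card_univ, Fintype.card_fin] at this
    omega
  rw [hcard, nsmul_eq_mul] at hhigh
  linarith

theorem sum_Icc_union_Ioc_sub_sum_Icc (m g c : ℕ) (hmg : m ≤ g) :
    ∑ n ∈ Icc 1 m ∪ Ioc (m + c) (g + c), (n : ℤ) - ∑ n ∈ Icc 1 g, (n : ℤ) =
      ((g - m : ℕ) : ℤ) * c := by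
  have hdisj : Disjoint (Icc 1 m) (Ioc (m + c) (g + c)) :=
    disjoint_left.2 fun n h₁ h₂ => by
      simp only [mem_Icc, mem_Ioc] at h₁ h₂
      omega
  have hIcc (k : ℕ) : Icc 1 k = Ioc 0 k := Icc_add_one_left_eq_Ioc 0 k
  rw [sum_union hdisj, ← map_add_right_Ioc, sum_map, hIcc, hIcc,
    ← sum_Ioc_consecutive _ (Nat.zero_le m) hmg]
  simp only [addRightEmbedding_apply, Nat.cast_add, sum_add_distrib, sum_const,
    Nat.card_Ioc, nsmul_eq_mul]
  ring

theorem weight_bound_unramified_case_b_general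
    (g γ : ℕ) (hg : 8 * γ ≤ g)
    (H : Set ℕ)
    (hadd : ∀ a ∈ H, ∀ b ∈ H, a + b ∈ H)
    (hfin : {n : ℕ | n ∉ H}.Finite) (hgenus : {n : ℕ | n ∉ H}.ncard = g)
    (ℓ : Fin g → ℕ) (hmono : StrictMono ℓ)
    (hrange : Set.range ℓ = {n : ℕ | n ∉ H})
    (hmin : ∀ h ∈ H, h ≠ 0 → g - 2 * γ + 1 ≤ h)
    (hicc : ∀ n : ℕ, g - 2 * γ + 1 ≤ n → n ≤ g → n ∈ H) :
    (∑ i, ((ℓ i : ℤ) - ((i : ℕ) + 1)) ≤ 2 * γ * g - 2 * γ * (4 * γ - 1)) ∧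
    ((∑ n ∈ Finset.Icc 1 (g - 2 * γ) ∪
        Finset.Icc (2 * g - 6 * γ + 2) (2 * g - 4 * γ + 1), (n : ℤ)) -
      ∑ i ∈ Finset.Icc 1 g, (i : ℤ) = 2 * γ * g - 2 * γ * (4 * γ - 1)) := by
  have hsmall : Set.Icc 1 (g - 2 * γ) ⊆ Set.range ℓ := hrange ▸ fun n ⟨hn₁, hn₂⟩ hnH =>
    absurd (hmin n hnH (by omega)) (by omega)
  have hgap_le : ∀ i, ℓ i ≤ 2 * g - 4 * γ + 1 := by
    intro i
    have hgap : ℓ i ∉ H := hrange.subset (Set.mem_range_self i)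
    have hIcc : Set.Icc (g - 2 * γ + 1) Hᶜ.ncard ⊆ H := by
      rw [Set.compl_def, hgenus]
      exact fun n hn => hicc n hn.1 hn.2
    have := lt_two_mul_of_Icc_ncard_compl_subset hadd hfin hIcc hgap
    omega
  have hweight : ((2 * γ : ℕ) : ℤ) * ((g - 4 * γ + 1 : ℕ) : ℤ) =
      2 * γ * g - 2 * γ * (4 * γ - 1) := by
    rw [show ((g - 4 * γ + 1 : ℕ) : ℤ) = g - 4 * γ + 1 by omega]
    push_cast
    ring
  constructor
  · have hsum := weight_le hmono hsmall hgap_le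
    rwa [show g - (g - 2 * γ) = 2 * γ by omega,
      show ((2 * g - 4 * γ + 1 : ℕ) : ℤ) - g = ((g - 4 * γ + 1 : ℕ) : ℤ) by omega, hweight] at hsum
  · have htop : Icc (2 * g - 6 * γ + 2) (2 * g - 4 * γ + 1) =
        Ioc (g - 2 * γ + (g - 4 * γ + 1)) (g + (g - 4 * γ + 1)) := by
      rw [← Icc_add_one_left_eq_Ioc]
      congr 1 <;> omega
    rw [htop, sum_Icc_union_Ioc_sub_sum_Icc _ _ _ (Nat.sub_le g (2 * γ)),
      Nat.sub_sub_self (by omega), hweight]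

theorem weight_bound_unramified_case_b
    (g γ : ℕ) (hγ : 1 ≤ γ) (hg : 8 * γ ≤ g)
    (H : Set ℕ)
    (h0 : 0 ∈ H) (hadd : ∀ a ∈ H, ∀ b ∈ H, a + b ∈ H)
    (hfin : {n : ℕ | n ∉ H}.Finite) (hgenus : {n : ℕ | n ∉ H}.ncard = g)
    (ℓ : Fin g → ℕ) (hmono : StrictMono ℓ)
    (hrange : Set.range ℓ = {n : ℕ | n ∉ H})
    (hmin : ∀ h ∈ H, h ≠ 0 → g - 2 * γ + 1 ≤ h)
    (hicc : ∀ n : ℕ, g - 2 * γ + 1 ≤ n → n ≤ g → n ∈ H) :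
    (∑ i, ((ℓ i : ℤ) - ((i : ℕ) + 1)) ≤ 2 * γ * g - 2 * γ * (4 * γ - 1)) ∧
    ((∑ n ∈ Finset.Icc 1 (g - 2 * γ) ∪
        Finset.Icc (2 * g - 6 * γ + 2) (2 * g - 4 * γ + 1), (n : ℤ)) -
      ∑ i ∈ Finset.Icc 1 g, (i : ℤ) = 2 * γ * g - 2 * γ * (4 * γ - 1)) :=
  weight_bound_unramified_case_b_general g γ hg H hadd hfin hgenus ℓ hmono hrange hmin hicc
end

section
/- Let γ ≥ 3 and g be integers with g ≥ 2γ + 2, and set c₁ = C(g−2γ, 2) + 2γ², c₂ = C(g−2γ, 2) + 4γ − 4, c₃ = max{(2γ−1)g − (γ−1)(2γ+1), 2γg − 2γ(4γ−1)}. Suppose W and t are natural numbers with t ≤ min{γ³ − γ, 2g − 4γ + 2} and g³ − g ≤ (c₁ − c₂)t + (2g − 4γ + 2)c₂ + (W − 2g + 4γ − 2)c₃, with W ≥ 2g − 4γ + 2. Then (W − 2g + 4γ − 2)c₃ ≥ 6γg² − 16γ²g + 16γ³ − 4γ² − 2γ. -/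
theorem counting_step
    (g γ : ℕ) (hγ : 3 ≤ γ) (hg : 2 * γ + 2 ≤ g)
    (W t : ℕ)
    (ht : t ≤ min (γ ^ 3 - γ) (2 * g - 4 * γ + 2))
    (hW : 2 * g - 4 * γ + 2 ≤ W)
    (hmain : (g : ℤ) ^ 3 - g ≤
      ((((g - 2 * γ).choose 2 : ℤ) + 2 * γ ^ 2) -
        (((g - 2 * γ).choose 2 : ℤ) + 4 * γ - 4)) * t +
      (2 * (g : ℤ) - 4 * γ + 2) * (((g - 2 * γ).choose 2 : ℤ) + 4 * γ - 4) +
      ((W : ℤ) - 2 * g + 4 * γ - 2) *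
        max ((2 * (γ : ℤ) - 1) * g - (γ - 1) * (2 * γ + 1))
            (2 * (γ : ℤ) * g - 2 * γ * (4 * γ - 1))) :
    ((W : ℤ) - 2 * g + 4 * γ - 2) *
        max ((2 * (γ : ℤ) - 1) * g - (γ - 1) * (2 * γ + 1))
            (2 * (γ : ℤ) * g - 2 * γ * (4 * γ - 1)) ≥
      6 * (γ : ℤ) * g ^ 2 - 16 * γ ^ 2 * g + 16 * γ ^ 3 - 4 * γ ^ 2 - 2 * γ := by
  have ht2 : (t : ℤ) ≤ 2 * (g : ℤ) - 4 * γ + 2 := by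
    have := ht.trans (min_le_right _ _)
    have h2g : 4 * γ + 2 ≤ 2 * g := by omega
    push_cast
    omega
  -- compute the binomial coefficient
  have hc : ((g - 2 * γ).choose 2 : ℤ) * 2 = ((g : ℤ) - 2 * γ) * ((g : ℤ) - 2 * γ - 1) := by
    obtain ⟨k, hk⟩ : ∃ k, g - 2 * γ = k + 2 := ⟨g - 2 * γ - 2, by omega⟩
    have hgk : (g : ℤ) - 2 * γ = (k : ℤ) + 2 := by
      have : (g : ℤ) = ((g - 2 * γ : ℕ) : ℤ) + 2 * γ := by push_cast; omega
      rw [this, hk]; push_cast; ring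
    rw [hk, hgk]
    have : (k + 2).choose 2 * 2 = (k + 2) * (k + 1) := by
      rw [Nat.choose_two_right]
      have hdvd : 2 ∣ (k + 2) * (k + 1) := by
        have h := (Nat.even_mul_succ_self k).two_dvd
        have : (k + 2) * (k + 1) = k * (k + 1) + 2 * (k + 1) := by ring
        rw [this]
        exact dvd_add h ⟨k + 1, rfl⟩
      exact Nat.div_mul_cancel hdvd
    have := congrArg (fun n : ℕ => (n : ℤ)) this
    push_cast at this
    push_cast
    linarith [this]
  set M := max ((2 * (γ : ℤ) - 1) * g - (γ - 1) * (2 * γ + 1))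
      (2 * (γ : ℤ) * g - 2 * γ * (4 * γ - 1)) with hM
  nlinarith [hmain, ht2, hc, sq_nonneg ((γ : ℤ) - 1),
    mul_le_mul_of_nonneg_right ht2 (by nlinarith [sq_nonneg ((γ:ℤ) - 1)] :
      (0 : ℤ) ≤ 2 * γ ^ 2 - 4 * γ + 4)]
end
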